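/- arXiv:2108.07078 — 2 statements merged into one kernel-verified Lean document; each statement's English description precedes it below -/
import Mathlib

section
/- Let n ≥ 2, θ, η ∈ {0,1}^n, and let m_θ = Σ_i θ_i, m_η = Σ_i η_i with m_θ, m_η ≤ ⌊n/2⌋. Then |D_1(θ,η) ∪ D_2(θ,η)| ≥ |m_θ − m_η|·(n − |m_θ − m_η|). -/
open Finset Real Filter

/-- The set of potential edges of an `n`-vertex graph: pairs `(i,j)` with `i < j`. -/
abbrev Edge (n : ℕ) := {e : Fin n × Fin n // e.1 < e.2}

/-- An observed graph: an edge indicator for each potential edge. -/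
abbrev ObsGraph (n : ℕ) := Edge n → Bool

/-- Edge probability under assignment `θ`: `p` within communities, `q` between. -/
noncomputable def edgeProb {n : ℕ} (p q : ℝ) (θ : Fin n → Bool) (e : Edge n) : ℝ :=
  if θ e.val.1 = θ e.val.2 then p else q

/-- Probability mass function of the observed graph under `θ`. -/
noncomputable def graphPMF {n : ℕ} (p q : ℝ) (θ : Fin n → Bool) (x : ObsGraph n) : ℝ :=
  ∏ e : Edge n, if x e then edgeProb p q θ e else 1 - edgeProb p q θ e

/-- Hellinger affinity of Bernoulli parameters. -/
noncomputable def rho (p q : ℝ) : ℝ := Real.sqrt (p * q) + Real.sqrt ((1 - p) * (1 - q))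

/-- Edges whose probability changes from `p` to `q` when replacing `θ` by `η`. -/
def D1 {n : ℕ} (θ η : Fin n → Bool) : Finset (Fin n × Fin n) :=
  Finset.univ.filter fun e => e.1 < e.2 ∧ θ e.1 = θ e.2 ∧ η e.1 ≠ η e.2

/-- Edges whose probability changes from `q` to `p` when replacing `θ` by `η`. -/
def D2 {n : ℕ} (θ η : Fin n → Bool) : Finset (Fin n × Fin n) :=
  Finset.univ.filter fun e => e.1 < e.2 ∧ θ e.1 ≠ θ e.2 ∧ η e.1 = η e.2

/-- Hamming distance. -/
def hdist {n : ℕ} (θ η : Fin n → Bool) : ℕ := (Finset.univ.filter fun i => θ i ≠ η i).card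

/-- The metric `k(θ,η) = h(θ,η) ∧ (n - h(θ,η))`. -/
def kdist {n : ℕ} (θ η : Fin n → Bool) : ℕ := min (hdist θ η) (n - hdist θ η)

/-- Size of the smallest community. -/
def countOnes {n : ℕ} (θ : Fin n → Bool) : ℕ := (Finset.univ.filter fun i => θ i = true).card

/-- The parameter space `Θ_n`. -/
def Theta (n : ℕ) : Finset (Fin n → Bool) :=
  Finset.univ.filter fun θ => 2 * countOnes θ ≤ n ∧
    ∀ i : Fin n, 2 * countOnes θ = n → (i : ℕ) = 0 → θ i = false

/-- Posterior mass of `A ⊆ Θ_n` given data `x`, under prior mass function `π`. -/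
noncomputable def postMass {n : ℕ} (p q : ℝ) (pri : (Fin n → Bool) → ℝ)
    (A : Finset (Fin n → Bool)) (x : ObsGraph n) : ℝ :=
  (∑ η ∈ A, pri η * graphPMF p q η x) / (∑ η ∈ Theta n, pri η * graphPMF p q η x)

/-- `P_θ`-expectation of the posterior mass of `A`. -/
noncomputable def expPostMass {n : ℕ} (p q : ℝ) (pri : (Fin n → Bool) → ℝ)
    (θ : Fin n → Bool) (A : Finset (Fin n → Bool)) : ℝ :=
  ∑ x : ObsGraph n, graphPMF p q θ x * postMass p q pri A x

/-- The uniform prior on `Θ_n`. -/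
noncomputable def unifPrior (n : ℕ) : (Fin n → Bool) → ℝ := fun _ => ((2:ℝ) ^ (n - 1))⁻¹

/-- Hamming ball `B_n(θ,k)` inside `Θ_n`. -/
def hball {n : ℕ} (θ : Fin n → Bool) (k : ℕ) : Finset (Fin n → Bool) :=
  (Theta n).filter fun η => kdist η θ ≤ k

/-!
A pair `(i, j)` lies in `D₁ ∪ D₂` exactly when `i` and `j` fall on different sides of the set
`S = {i | θ i ≠ η i}`, so `|D₁ ∪ D₂| = h (n - h)` with `h = |S|` the Hamming distance. Writing
`d = |m_θ - m_η|`, we have `d ≤ h ≤ m_θ + m_η`, hence `h + d ≤ 2 max(m_θ, m_η) ≤ n`; since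
`h (n - h) - d (n - d) = (h - d) (n - h - d)`, the bound follows.
-/

lemma card_filter_lt_and_mem_iff_notMem {α : Type*} [LinearOrder α] [Fintype α]
    (s : Finset α) :
    #(univ.filter fun e : α × α => e.1 < e.2 ∧ (e.1 ∈ s ↔ e.2 ∉ s)) = #s * #sᶜ := by
  rw [← card_product]
  refine card_nbij' (fun e => if e.1 ∈ s then e else e.swap)
    (fun e => if e.1 < e.2 then e else e.swap) ?_ ?_ ?_ ?_
  · rintro ⟨i, j⟩ h
    simp only [coe_filter, Set.mem_ofPred_eq, mem_univ, true_and] at h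
    by_cases hi : i ∈ s <;> simp_all
  · rintro ⟨i, j⟩ h
    simp only [coe_product, Set.mem_prod, mem_coe, mem_compl] at h
    have hij : i ≠ j := by rintro rfl; exact h.2 h.1
    rcases hij.lt_or_gt with hlt | hgt
    · simp [hlt, h.1, h.2]
    · simp [hgt, hgt.not_gt, h.1, h.2]
  · rintro ⟨i, j⟩ h
    simp only [coe_filter, Set.mem_ofPred_eq, mem_univ, true_and] at h
    by_cases hi : i ∈ s <;> simp_all [h.1.not_gt]
  · rintro ⟨i, j⟩ h
    simp only [coe_product, Set.mem_prod, mem_coe, mem_compl] at h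
    have hij : i ≠ j := by rintro rfl; exact h.2 h.1
    rcases hij.lt_or_gt with hlt | hgt
    · simp [hlt, h.1]
    · simp [hgt.not_gt, h.2]

lemma Nat.mul_sub_le_mul_sub_of_le_of_add_le {d h n : ℕ} (hdh : d ≤ h) (hhd : h + d ≤ n) :
    d * (n - d) ≤ h * (n - h) := by
  obtain ⟨k, rfl⟩ := Nat.exists_eq_add_of_le hdh
  obtain ⟨r, rfl⟩ := Nat.exists_eq_add_of_le hhd
  rw [show d + k + d + r - d = d + k + r by omega, show d + k + d + r - (d + k) = d + r by omega]
  nlinarith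

section

variable {n : ℕ}

lemma D1_union_D2_eq (θ η : Fin n → Bool) :
    D1 θ η ∪ D2 θ η = univ.filter fun e : Fin n × Fin n =>
      e.1 < e.2 ∧ (e.1 ∈ univ.filter (fun i => θ i ≠ η i) ↔
        e.2 ∉ univ.filter (fun i => θ i ≠ η i)) := by
  ext ⟨i, j⟩
  simp only [D1, D2, mem_union, mem_filter, mem_univ, true_and]
  cases θ i <;> cases θ j <;> cases η i <;> cases η j <;> simp

lemma card_D1_union_D2 (θ η : Fin n → Bool) :
    #(D1 θ η ∪ D2 θ η) = hdist θ η * (n - hdist θ η) := by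
  rw [D1_union_D2_eq, card_filter_lt_and_mem_iff_notMem, card_compl, Fintype.card_fin]
  rfl

lemma hdist_comm (θ η : Fin n → Bool) : hdist θ η = hdist η θ := by
  simp only [hdist, ne_comm]

lemma countOnes_le_countOnes_add_hdist (θ η : Fin n → Bool) :
    countOnes θ ≤ countOnes η + hdist θ η := by
  refine (card_le_card fun i => ?_).trans (card_union_le _ _)
  simp only [mem_filter, mem_univ, true_and, mem_union]
  cases θ i <;> cases η i <;> simp

lemma hdist_le_countOnes_add_countOnes (θ η : Fin n → Bool) :
    hdist θ η ≤ countOnes θ + countOnes η := by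
  refine (card_le_card fun i => ?_).trans (card_union_le _ _)
  simp only [mem_filter, mem_univ, true_and, mem_union]
  cases θ i <;> cases η i <;> simp

lemma dist_countOnes_le_hdist (θ η : Fin n → Bool) :
    Nat.dist (countOnes θ) (countOnes η) ≤ hdist θ η := by
  have := countOnes_le_countOnes_add_hdist θ η
  have := countOnes_le_countOnes_add_hdist η θ
  rw [hdist_comm] at this
  unfold Nat.dist
  omega

end

theorem stmt2_general (n : ℕ) (θ η : Fin n → Bool)
    (hmθ : countOnes θ ≤ n / 2) (hmη : countOnes η ≤ n / 2) :
    Nat.dist (countOnes θ) (countOnes η) * (n - Nat.dist (countOnes θ) (countOnes η))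
      ≤ (D1 θ η ∪ D2 θ η).card := by
  rw [card_D1_union_D2]
  refine Nat.mul_sub_le_mul_sub_of_le_of_add_le (dist_countOnes_le_hdist θ η) ?_
  have := hdist_le_countOnes_add_countOnes θ η
  unfold Nat.dist
  omega

/-- `|D_1(θ,η) ∪ D_2(θ,η)| ≥ |m_θ − m_η|·(n − |m_θ − m_η|)`. -/
theorem stmt2 (n : ℕ) (hn : 2 ≤ n) (θ η : Fin n → Bool)
    (hmθ : countOnes θ ≤ n / 2) (hmη : countOnes η ≤ n / 2) :
    Nat.dist (countOnes θ) (countOnes η) * (n - Nat.dist (countOnes θ) (countOnes η))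
      ≤ (D1 θ η ∪ D2 θ η).card :=
  stmt2_general n θ η hmθ hmη
end

section
/- Let n ≥ 2, p, q ∈ (0,1), θ, η ∈ {0,1}^n, and let w_θ, w_η > 0 be weights. Then there exists a test function φ : 𝒳_n → [0,1] such that w_θ · P_θ φ(X^n) + w_η · P_η(1 − φ(X^n)) ≤ (w_θ)^{1/2}(w_η)^{1/2} · ρ(p,q)^{|D_1(θ,η)| + |D_2(θ,η)|}, where P_θ φ(X^n) denotes the expectation Σ_{x∈𝒳_n} p_θ(x) φ(x). -/
open Finset Real Filter

/-!
The likelihood-ratio test `φ = 𝟙{w_θ p_θ ≤ w_η p_η}` turns the left side into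
`∑ₓ min (w_θ p_θ x) (w_η p_η x) ≤ √w_θ √w_η ∑ₓ √(p_θ x p_η x)`. The Hellinger affinity on the
right tensorises over the independent edges: an edge contributes `ρ(p,q)` when exactly one of
`θ`, `η` places its endpoints in the same community, i.e. when it lies in `D₁ ∪ D₂`, and
`ρ(p,p) = ρ(q,q) = 1` otherwise.
-/

lemma min_le_sqrt_mul_sqrt (a b : ℝ) : min a b ≤ √a * √b := by
  rcases le_or_gt a 0 with ha | ha
  · exact (min_le_left a b).trans (ha.trans (by positivity))
  rcases le_or_gt b 0 with hb | hb
  · exact (min_le_right a b).trans (hb.trans (by positivity))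
  rw [← Real.sqrt_mul ha.le]
  exact Real.le_sqrt_of_sq_le (by
    rcases le_total a b with h | h
    · rw [min_eq_left h]; nlinarith
    · rw [min_eq_right h]; nlinarith)

section Testing

variable {α : Type*} [Fintype α]

theorem exists_test_sum_eq_sum_min (f g : α → ℝ) :
    ∃ φ : α → ℝ, (∀ x, φ x ∈ Set.Icc (0:ℝ) 1) ∧
      ∑ x, f x * φ x + ∑ x, g x * (1 - φ x) = ∑ x, min (f x) (g x) := by
  classical
  refine ⟨fun x => if f x ≤ g x then 1 else 0, fun x => by dsimp only; split_ifs <;> simp, ?_⟩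
  rw [← Finset.sum_add_distrib]
  refine Finset.sum_congr rfl fun x _ => ?_
  dsimp only
  split_ifs with h
  · simp [min_eq_left h]
  · simp [min_eq_right (not_le.mp h).le]

theorem exists_test_le_sqrt_mul_sqrt_mul_sum_sqrt (a b : ℝ) {P Q : α → ℝ}
    (hP : ∀ x, 0 ≤ P x) (hQ : ∀ x, 0 ≤ Q x) :
    ∃ φ : α → ℝ, (∀ x, φ x ∈ Set.Icc (0:ℝ) 1) ∧
      a * ∑ x, P x * φ x + b * ∑ x, Q x * (1 - φ x) ≤ √a * √b * ∑ x, √(P x * Q x) := by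
  obtain ⟨φ, hφ, hsum⟩ := exists_test_sum_eq_sum_min (fun x => a * P x) (fun x => b * Q x)
  refine ⟨φ, hφ, ?_⟩
  simp only [Finset.mul_sum, ← mul_assoc] at hsum ⊢
  rw [hsum]
  gcongr with x
  calc min (a * P x) (b * Q x) ≤ √(a * P x) * √(b * Q x) := min_le_sqrt_mul_sqrt _ _
    _ = √a * √b * √(P x * Q x) := by
      rw [Real.sqrt_mul' a (hP x), Real.sqrt_mul' b (hQ x), Real.sqrt_mul (hP x)]; ring

end Testing

theorem rho_self {p : ℝ} (hp : p ∈ Set.Icc (0:ℝ) 1) : rho p p = 1 := by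
  rw [rho, Real.sqrt_mul_self hp.1, Real.sqrt_mul_self (sub_nonneg.mpr hp.2)]; ring

theorem rho_comm (p q : ℝ) : rho p q = rho q p := by
  rw [rho, rho, mul_comm p, mul_comm (1 - p)]

theorem sum_sqrt_prod_bernoulli_mul {ι : Type*} [Fintype ι] [DecidableEq ι] {r s : ι → ℝ}
    (hr : ∀ i, r i ∈ Set.Icc (0:ℝ) 1) (hs : ∀ i, s i ∈ Set.Icc (0:ℝ) 1) :
    ∑ x : ι → Bool, √((∏ i, if x i then r i else 1 - r i) * ∏ i, if x i then s i else 1 - s i)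
      = ∏ i, rho (r i) (s i) := by
  have hfactor (i : ι) (b : Bool) :
      0 ≤ (if b then r i else 1 - r i) * (if b then s i else 1 - s i) := by
    obtain ⟨hr0, hr1⟩ := hr i
    obtain ⟨hs0, hs1⟩ := hs i
    cases b <;> simp only [Bool.false_eq_true, if_true, if_false] <;> nlinarith
  simp_rw [← Finset.prod_mul_distrib, Real.sqrt_prod _ fun i _ => hfactor i _]
  rw [← Fintype.prod_sum fun i (b : Bool) =>
    √((if b then r i else 1 - r i) * if b then s i else 1 - s i)]
  refine Finset.prod_congr rfl fun i _ => ?_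
  simp [rho]

section StochasticBlockModel

variable {n : ℕ}

theorem edgeProb_mem_Icc {p q : ℝ} (hp : p ∈ Set.Icc (0:ℝ) 1) (hq : q ∈ Set.Icc (0:ℝ) 1)
    (θ : Fin n → Bool) (e : Edge n) : edgeProb p q θ e ∈ Set.Icc (0:ℝ) 1 := by
  unfold edgeProb; split_ifs <;> assumption

theorem graphPMF_nonneg {p q : ℝ} (hp : p ∈ Set.Icc (0:ℝ) 1) (hq : q ∈ Set.Icc (0:ℝ) 1)
    (θ : Fin n → Bool) (x : ObsGraph n) : 0 ≤ graphPMF p q θ x := by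
  refine Finset.prod_nonneg fun e _ => ?_
  obtain ⟨h0, h1⟩ := edgeProb_mem_Icc hp hq θ e
  split_ifs <;> linarith

theorem sum_sqrt_graphPMF_mul {p q : ℝ} (hp : p ∈ Set.Icc (0:ℝ) 1) (hq : q ∈ Set.Icc (0:ℝ) 1)
    (θ η : Fin n → Bool) :
    ∑ x : ObsGraph n, √(graphPMF p q θ x * graphPMF p q η x)
      = ∏ e : Edge n, rho (edgeProb p q θ e) (edgeProb p q η e) :=
  sum_sqrt_prod_bernoulli_mul (edgeProb_mem_Icc hp hq θ) (edgeProb_mem_Icc hp hq η)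

theorem rho_edgeProb {p q : ℝ} (hp : p ∈ Set.Icc (0:ℝ) 1) (hq : q ∈ Set.Icc (0:ℝ) 1)
    (θ η : Fin n → Bool) (e : Edge n) :
    rho (edgeProb p q θ e) (edgeProb p q η e)
      = if (θ e.1.1 = θ e.1.2 ↔ η e.1.1 = η e.1.2) then 1 else rho p q := by
  unfold edgeProb
  by_cases hθ : θ e.1.1 = θ e.1.2 <;> by_cases hη : η e.1.1 = η e.1.2 <;>
    simp [hθ, hη, rho_self, hp, hq, rho_comm q p]

theorem card_D1_add_card_D2 (θ η : Fin n → Bool) :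
    #(D1 θ η) + #(D2 θ η) = #{e : Edge n | ¬(θ e.1.1 = θ e.1.2 ↔ η e.1.1 = η e.1.2)} := by
  have hdisj : Disjoint (D1 θ η) (D2 θ η) := by
    simp +contextual [Finset.disjoint_left, D1, D2]
  rw [← Finset.card_union_of_disjoint hdisj, ← Finset.card_map (Function.Embedding.subtype _)]
  congr 1
  ext ⟨i, j⟩
  simp only [D1, D2, Finset.mem_union, Finset.mem_filter, Finset.mem_univ, true_and,
    Finset.mem_map, Function.Embedding.coe_subtype]
  constructor
  · rintro (⟨hij, hθ, hη⟩ | ⟨hij, hθ, hη⟩) <;> exact ⟨⟨(i, j), hij⟩, by simp [hθ, hη], rfl⟩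
  · rintro ⟨⟨_, hij⟩, hflip, rfl⟩
    by_cases hθ : θ i = θ j <;> simp_all

theorem sum_sqrt_graphPMF_mul_eq_rho_pow {p q : ℝ} (hp : p ∈ Set.Icc (0:ℝ) 1)
    (hq : q ∈ Set.Icc (0:ℝ) 1) (θ η : Fin n → Bool) :
    ∑ x : ObsGraph n, √(graphPMF p q θ x * graphPMF p q η x)
      = rho p q ^ (#(D1 θ η) + #(D2 θ η)) := by
  simp_rw [sum_sqrt_graphPMF_mul hp hq, rho_edgeProb hp hq, card_D1_add_card_D2]
  simp [Finset.prod_ite]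

end StochasticBlockModel

theorem stmt4_general (n : ℕ) (p q : ℝ) (hp : p ∈ Set.Ioo (0:ℝ) 1)
    (hq : q ∈ Set.Ioo (0:ℝ) 1) (θ η : Fin n → Bool)
    (wθ wη : ℝ) :
    ∃ φ : ObsGraph n → ℝ, (∀ x, φ x ∈ Set.Icc (0:ℝ) 1) ∧
      wθ * (∑ x : ObsGraph n, graphPMF p q θ x * φ x)
        + wη * (∑ x : ObsGraph n, graphPMF p q η x * (1 - φ x))
      ≤ Real.sqrt wθ * Real.sqrt wη * rho p q ^ ((D1 θ η).card + (D2 θ η).card) := by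
  have hp' := Set.Ioo_subset_Icc_self hp
  have hq' := Set.Ioo_subset_Icc_self hq
  obtain ⟨φ, hφ, hbound⟩ := exists_test_le_sqrt_mul_sqrt_mul_sum_sqrt wθ wη
    (graphPMF_nonneg hp' hq' θ) (graphPMF_nonneg hp' hq' η)
  rw [sum_sqrt_graphPMF_mul_eq_rho_pow hp' hq'] at hbound
  exact ⟨φ, hφ, hbound⟩

/-- existence of a test `φ` with
`w_θ P_θ φ + w_η P_η (1−φ) ≤ √(w_θ w_η) ρ(p,q)^{|D_1|+|D_2|}`. -/
theorem stmt4 (n : ℕ) (hn : 2 ≤ n) (p q : ℝ) (hp : p ∈ Set.Ioo (0:ℝ) 1)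
    (hq : q ∈ Set.Ioo (0:ℝ) 1) (θ η : Fin n → Bool)
    (wθ wη : ℝ) (hwθ : 0 < wθ) (hwη : 0 < wη) :
    ∃ φ : ObsGraph n → ℝ, (∀ x, φ x ∈ Set.Icc (0:ℝ) 1) ∧
      wθ * (∑ x : ObsGraph n, graphPMF p q θ x * φ x)
        + wη * (∑ x : ObsGraph n, graphPMF p q η x * (1 - φ x))
      ≤ Real.sqrt wθ * Real.sqrt wη * rho p q ^ ((D1 θ η).card + (D2 θ η).card) :=
  stmt4_general n p q hp hq θ η wθ wη
end
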